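/- Let Q₃ be the symmetric integer matrix ![![0,1,0],![1,0,0],![0,0,-6]] and let g₁ = ![![1,0,0],![3,1,6],![1,0,1]], g₂ = ![![1,3,6],![3,4,12],![-1,-2,-5]], g₃ = ![![0,1,0],![1,0,0],![0,0,1]]. Then each gᵢ satisfies gᵢᵀ · Q₃ · gᵢ = Q₃; moreover, with D = diag(2,2,12), each matrix D·gᵢ·D⁻¹ has integer entries and carries the subgroup Λ = 2ℤ × 2ℤ × 12ℤ of ℤ³ into itself, so induces an automorphism hᵢ of the finite abelian group A = ℤ³/Λ ≅ ℤ/2 × ℤ/2 × ℤ/12; and the subgroup of Aut(A) generated by h₁, h₂, h₃ is isomorphic to the dihedral group of order 12. -/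

import Mathlib

open Matrix

namespace Stmt2

/-- A Gram matrix (up to sign of the rank-one summand) of the lattice `H ⊕ ⟨6⟩`. -/
def Q : Matrix (Fin 3) (Fin 3) ℤ := !![0, 1, 0; 1, 0, 0; 0, 0, -6]

def g1 : Matrix (Fin 3) (Fin 3) ℤ := !![1, 0, 0; 3, 1, 6; 1, 0, 1]

def g2 : Matrix (Fin 3) (Fin 3) ℤ := !![1, 3, 6; 3, 4, 12; -1, -2, -5]

def g3 : Matrix (Fin 3) (Fin 3) ℤ := !![0, 1, 0; 1, 0, 0; 0, 0, 1]

/-- `D = diag(2, 2, 12)`. -/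
def D : Matrix (Fin 3) (Fin 3) ℤ := Matrix.diagonal ![2, 2, 12]

/-- The subgroup `Λ = 2ℤ × 2ℤ × 12ℤ` of `ℤ³`. -/
def Λ : AddSubgroup (Fin 3 → ℤ) :=
  AddSubgroup.pi Set.univ fun i => AddSubgroup.zmultiples (![(2 : ℤ), 2, 12] i)

/-- The finite abelian group `A = ℤ³/Λ`. -/
abbrev A : Type := (Fin 3 → ℤ) ⧸ Λ

/-! ### Auxiliary material -/

/-- The target finite group. -/
abbrev B : Type := ZMod 2 × ZMod 2 × ZMod 12

def M1mat : Matrix (Fin 3) (Fin 3) ℤ := !![1,0,0; 3,1,1; 6,0,1]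
def M2mat : Matrix (Fin 3) (Fin 3) ℤ := !![1,3,1; 3,4,2; -6,-12,-5]
def M3mat : Matrix (Fin 3) (Fin 3) ℤ := !![0,1,0; 1,0,0; 0,0,1]

lemma mem_Λ_iff (v : Fin 3 → ℤ) : v ∈ Λ ↔ (2 ∣ v 0 ∧ 2 ∣ v 1 ∧ 12 ∣ v 2) := by
  constructor
  · intro h
    exact ⟨Int.mem_zmultiples_iff.mp (h 0 trivial),
           Int.mem_zmultiples_iff.mp (h 1 trivial),
           Int.mem_zmultiples_iff.mp (h 2 trivial)⟩
  · rintro ⟨h0, h1, h2⟩ i -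
    fin_cases i
    · exact Int.mem_zmultiples_iff.mpr h0
    · exact Int.mem_zmultiples_iff.mpr h1
    · exact Int.mem_zmultiples_iff.mpr h2

lemma mulVec3 (a b c d e f' g h i : ℤ) (v : Fin 3 → ℤ) :
    (!![a,b,c; d,e,f'; g,h,i]).mulVec v =
      ![a * v 0 + b * v 1 + c * v 2, d * v 0 + e * v 1 + f' * v 2,
        g * v 0 + h * v 1 + i * v 2] := by
  funext j
  fin_cases j <;> simp [Matrix.mulVec, dotProduct, Fin.sum_univ_three]

lemma stab1 : ∀ v ∈ Λ, M1mat.mulVec v ∈ Λ := by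
  intro v hv
  rw [mem_Λ_iff] at hv ⊢
  rw [M1mat, mulVec3]
  simp only [Matrix.cons_val_zero, Matrix.cons_val_one, Matrix.head_cons,
    Matrix.cons_val_two, Matrix.tail_cons]
  omega

lemma stab2 : ∀ v ∈ Λ, M2mat.mulVec v ∈ Λ := by
  intro v hv
  rw [mem_Λ_iff] at hv ⊢
  rw [M2mat, mulVec3]
  simp only [Matrix.cons_val_zero, Matrix.cons_val_one, Matrix.head_cons,
    Matrix.cons_val_two, Matrix.tail_cons]
  omega

lemma stab3 : ∀ v ∈ Λ, M3mat.mulVec v ∈ Λ := by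
  intro v hv
  rw [mem_Λ_iff] at hv ⊢
  rw [M3mat, mulVec3]
  simp only [Matrix.cons_val_zero, Matrix.cons_val_one, Matrix.head_cons,
    Matrix.cons_val_two, Matrix.tail_cons]
  omega

/-- The reduction homomorphism `ℤ³ →+ B`. -/
def f : (Fin 3 → ℤ) →+ B where
  toFun v := ((v 0 : ZMod 2), (v 1 : ZMod 2), (v 2 : ZMod 12))
  map_zero' := by simp
  map_add' v w := by simp [Prod.ext_iff]

lemma hker : Λ = f.ker := by
  ext v
  rw [AddMonoidHom.mem_ker, mem_Λ_iff]
  simp [f, Prod.ext_iff, ZMod.intCast_zmod_eq_zero_iff_dvd]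

lemma hsurj : Function.Surjective f := by
  rintro ⟨a, b, c⟩
  obtain ⟨x, rfl⟩ := ZMod.intCast_surjective a
  obtain ⟨y, rfl⟩ := ZMod.intCast_surjective b
  obtain ⟨z, rfl⟩ := ZMod.intCast_surjective c
  exact ⟨![x, y, z], by simp [f]⟩

/-- The isomorphism `A ≃+ B`. -/
noncomputable def e : A ≃+ B :=
  (QuotientAddGroup.quotientAddEquivOfEq hker).trans
    (QuotientAddGroup.quotientKerEquivOfSurjective f hsurj)

lemma e_mk (v : Fin 3 → ℤ) : e (QuotientAddGroup.mk v) = f v := rfl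

instance autGroup {G : Type*} [AddGroup G] : Group (AddAut G) :=
  inferInstanceAs (Group (Multiplicative (AddAut G)))

lemma autMul_apply {G : Type*} [AddGroup G] (a b : AddAut G) (y : G) :
    (a * b) y = a (b y) := rfl

/-- Transport of automorphism groups along an additive equivalence. -/
def autCongr {G H : Type*} [AddGroup G] [AddGroup H] (e : G ≃+ H) :
    AddAut G ≃* AddAut H where
  toFun g := (e.symm.trans g).trans e
  invFun g := (e.trans g).trans e.symm
  left_inv g := by ext x; simp
  right_inv g := by ext x; simp
  map_mul' g h := by ext x; simp [autMul_apply]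

def F1 : B → B := fun x =>
  (x.1, x.1 + x.2.1 + ((x.2.2.val : ZMod 2)), x.2.2 + 6 * ((x.1.val : ZMod 12)))
def F2 : B → B := fun x =>
  (x.1 + x.2.1 + ((x.2.2.val : ZMod 2)), x.1, 7 * x.2.2 + 6 * ((x.1.val : ZMod 12)))
def F3 : B → B := fun x => (x.2.1, x.1, x.2.2)

def h1' : AddAut B := ⟨⟨F1, F1, by decide, by decide⟩, by decide⟩
def h2' : AddAut B := ⟨⟨F2, fun x => F2 (F2 x), by decide, by decide⟩, by decide⟩
def h3' : AddAut B := ⟨⟨F3, F3, by decide, by decide⟩, by decide⟩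

lemma cast_down (x : ℤ) : (((x : ZMod 12)).val : ZMod 2) = (x : ZMod 2) := by
  have h1 : (((x : ZMod 12)).val : ℤ) = x % 12 := ZMod.val_intCast x
  have h2 : ((((x : ZMod 12)).val : ℤ) : ZMod 2) = (((x : ZMod 12)).val : ZMod 2) := by
    push_cast; ring
  rw [← h2, h1, ZMod.intCast_eq_intCast_iff]
  show x % 12 % 2 = x % 2
  omega

lemma cast_up (x : ℤ) :
    (6 : ZMod 12) * (((x : ZMod 2)).val : ZMod 12) = 6 * (x : ZMod 12) := by
  have h1 : (((x : ZMod 2)).val : ℤ) = x % 2 := ZMod.val_intCast x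
  have h2 : ((((x : ZMod 2)).val : ℤ) : ZMod 12) = (((x : ZMod 2)).val : ZMod 12) := by
    push_cast; ring
  rw [← h2, h1,
    show (6 : ZMod 12) * ((x % 2 : ℤ) : ZMod 12) = (((6 * (x % 2)) : ℤ) : ZMod 12) by
      push_cast; ring,
    show (6 : ZMod 12) * ((x : ℤ) : ZMod 12) = (((6 * x) : ℤ) : ZMod 12) by
      push_cast; ring,
    ZMod.intCast_eq_intCast_iff]
  show 6 * (x % 2) % 12 = 6 * x % 12
  omega

lemma comp1 (v : Fin 3 → ℤ) : h1' (f v) = f (M1mat.mulVec v) := by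
  show F1 (f v) = f (M1mat.mulVec v)
  rw [M1mat, mulVec3]
  simp only [f, F1, AddMonoidHom.coe_mk, ZeroHom.coe_mk, Matrix.cons_val_zero,
    Matrix.cons_val_one, Matrix.head_cons, Matrix.cons_val_two, Matrix.tail_cons]
  have h2 : (2 : ZMod 2) = 0 := rfl
  have h12 : (12 : ZMod 12) = 0 := rfl
  refine Prod.ext ?_ (Prod.ext ?_ ?_)
  · push_cast; ring
  · simp only [cast_down]; push_cast; linear_combination (-(v 0 : ZMod 2)) * h2
  · simp only [cast_up]; push_cast; ring

lemma comp2 (v : Fin 3 → ℤ) : h2' (f v) = f (M2mat.mulVec v) := by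
  show F2 (f v) = f (M2mat.mulVec v)
  rw [M2mat, mulVec3]
  simp only [f, F2, AddMonoidHom.coe_mk, ZeroHom.coe_mk, Matrix.cons_val_zero,
    Matrix.cons_val_one, Matrix.head_cons, Matrix.cons_val_two, Matrix.tail_cons]
  have h2 : (2 : ZMod 2) = 0 := rfl
  have h12 : (12 : ZMod 12) = 0 := rfl
  refine Prod.ext ?_ (Prod.ext ?_ ?_)
  · simp only [cast_down]; push_cast; linear_combination (-(v 1 : ZMod 2)) * h2
  · push_cast; linear_combination (-(v 0 : ZMod 2) - 2 * (v 1 : ZMod 2) - (v 2 : ZMod 2)) * h2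
  · simp only [cast_up]; push_cast
    linear_combination ((v 0 : ZMod 12) + (v 1 : ZMod 12) + (v 2 : ZMod 12)) * h12

lemma comp3 (v : Fin 3 → ℤ) : h3' (f v) = f (M3mat.mulVec v) := by
  show F3 (f v) = f (M3mat.mulVec v)
  rw [M3mat, mulVec3]
  simp only [f, F3, AddMonoidHom.coe_mk, ZeroHom.coe_mk, Matrix.cons_val_zero,
    Matrix.cons_val_one, Matrix.head_cons, Matrix.cons_val_two, Matrix.tail_cons]
  refine Prod.ext ?_ (Prod.ext ?_ ?_) <;> push_cast <;> ring

/-! ### The dihedral structure on the group generated by `h1'`, `h2'`, `h3'` -/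

instance : DecidableEq (AddAut B) := fun a b => decidable_of_iff _ DFunLike.ext_iff.symm

def ρ : AddAut B := h1' * h3'
def σ' : AddAut B := h3' * h2'

def φf : DihedralGroup 6 → AddAut B
  | .r i => ρ ^ i.val
  | .sr i => σ' * ρ ^ i.val

def ψ (i : ZMod 6) : AddAut B := ρ ^ i.val

lemma h6 : ρ ^ 6 = 1 := by decide
lemma hσ2 : σ' * σ' = 1 := by decide
lemma hswap1 : ρ * σ' = σ' * ρ⁻¹ := by decide

lemma key0 (a : ℕ) : ρ ^ (a % 6) = ρ ^ a := by
  conv_rhs => rw [← Nat.div_add_mod a 6]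
  rw [pow_add, pow_mul, h6, one_pow, one_mul]

lemma ψ_add (i j : ZMod 6) : ψ (i + j) = ψ i * ψ j := by
  rw [ψ, ψ, ψ, ZMod.val_add, key0, pow_add]

lemma ψ_zero : ψ 0 = 1 := pow_zero ρ

lemma ψ_neg (i : ZMod 6) : ψ (-i) = (ψ i)⁻¹ := by
  have : ψ i * ψ (-i) = 1 := by rw [← ψ_add, add_neg_cancel, ψ_zero]
  exact eq_inv_of_mul_eq_one_right this

lemma swapn (n : ℕ) : ρ ^ n * σ' = σ' * ρ⁻¹ ^ n := by
  induction n with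
  | zero => simp
  | succ k ih =>
      rw [pow_succ, mul_assoc, hswap1, ← mul_assoc, ih, mul_assoc, ← pow_succ]

lemma swap (i : ZMod 6) : ψ i * σ' = σ' * ψ (-i) := by
  rw [ψ_neg]
  show ρ ^ i.val * σ' = σ' * (ρ ^ i.val)⁻¹
  rw [swapn, inv_pow]

def φ : DihedralGroup 6 →* AddAut B where
  toFun := φf
  map_one' := by decide
  map_mul' a b := by
    cases a with
    | r i =>
        cases b with
        | r j =>
            show ψ (i + j) = ψ i * ψ j
            exact ψ_add i j
        | sr j =>
            show σ' * ψ (j - i) = ψ i * (σ' * ψ j)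
            rw [← mul_assoc, swap, mul_assoc, ← ψ_add, sub_eq_neg_add]
    | sr i =>
        cases b with
        | r j =>
            show σ' * ψ (i + j) = σ' * ψ i * ψ j
            rw [mul_assoc, ψ_add]
        | sr j =>
            show ψ (j - i) = σ' * ψ i * (σ' * ψ j)
            rw [mul_assoc, ← mul_assoc (ψ i), swap, ← mul_assoc, ← mul_assoc, hσ2,
              one_mul, ← ψ_add, sub_eq_neg_add]

lemma hinj : Function.Injective φ := by
  rw [injective_iff_map_eq_one]
  intro a
  show φf a = 1 → a = 1
  revert a
  decide

lemma hρ_mem : ρ ∈ Subgroup.closure ({h1', h2', h3'} : Set (AddAut B)) :=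
  mul_mem (Subgroup.subset_closure (by simp)) (Subgroup.subset_closure (by simp))

lemma hσ_mem : σ' ∈ Subgroup.closure ({h1', h2', h3'} : Set (AddAut B)) :=
  mul_mem (Subgroup.subset_closure (by simp)) (Subgroup.subset_closure (by simp))

lemma hrange : φ.range = Subgroup.closure ({h1', h2', h3'} : Set (AddAut B)) := by
  apply le_antisymm
  · rintro x ⟨g, rfl⟩
    cases g with
    | r i => exact pow_mem hρ_mem _
    | sr i => exact mul_mem hσ_mem (pow_mem hρ_mem _)
  · rw [Subgroup.closure_le]
    rintro x (rfl | rfl | rfl)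
    · exact ⟨.sr 3, by decide⟩
    · exact ⟨.r 2, by decide⟩
    · exact ⟨.sr 4, by decide⟩

noncomputable def isoB :
    (Subgroup.closure ({h1', h2', h3'} : Set (AddAut B))) ≃* DihedralGroup 6 :=
  (MulEquiv.subgroupCongr hrange.symm).trans (MonoidHom.ofInjective hinj).symm

/-! ### Back to `A` -/

noncomputable def Φ : AddAut A ≃* AddAut B := autCongr e

noncomputable def H1 : AddAut A := Φ.symm h1'
noncomputable def H2 : AddAut A := Φ.symm h2'
noncomputable def H3 : AddAut A := Φ.symm h3'

lemma H_mk1 (v : Fin 3 → ℤ) :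
    H1 (QuotientAddGroup.mk v) = QuotientAddGroup.mk (M1mat.mulVec v) := by
  apply e.injective
  show e (e.symm (h1' (e (QuotientAddGroup.mk v)))) = _
  rw [e.apply_symm_apply, e_mk, e_mk, comp1]

lemma H_mk2 (v : Fin 3 → ℤ) :
    H2 (QuotientAddGroup.mk v) = QuotientAddGroup.mk (M2mat.mulVec v) := by
  apply e.injective
  show e (e.symm (h2' (e (QuotientAddGroup.mk v)))) = _
  rw [e.apply_symm_apply, e_mk, e_mk, comp2]

lemma H_mk3 (v : Fin 3 → ℤ) :
    H3 (QuotientAddGroup.mk v) = QuotientAddGroup.mk (M3mat.mulVec v) := by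
  apply e.injective
  show e (e.symm (h3' (e (QuotientAddGroup.mk v)))) = _
  rw [e.apply_symm_apply, e_mk, e_mk, comp3]

lemma hmap :
    Subgroup.map Φ.toMonoidHom (Subgroup.closure {H1, H2, H3}) =
      Subgroup.closure ({h1', h2', h3'} : Set (AddAut B)) := by
  rw [MonoidHom.map_closure]
  congr 1
  rw [Set.image_insert_eq, Set.image_insert_eq, Set.image_singleton]
  show ({Φ H1, Φ H2, Φ H3} : Set (AddAut B)) = {h1', h2', h3'}
  rw [H1, H2, H3, Φ.apply_symm_apply, Φ.apply_symm_apply, Φ.apply_symm_apply]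

noncomputable def isoA :
    (Subgroup.closure {H1, H2, H3} : Subgroup (AddAut A)) ≃* DihedralGroup 6 :=
  ((Φ.subgroupMap _).trans (MulEquiv.subgroupCongr hmap)).trans isoB

theorem statement2 :
    (g1ᵀ * Q * g1 = Q ∧ g2ᵀ * Q * g2 = Q ∧ g3ᵀ * Q * g3 = Q) ∧
    Nonempty (A ≃+ ZMod 2 × ZMod 2 × ZMod 12) ∧
    ∃ M1 M2 M3 : Matrix (Fin 3) (Fin 3) ℤ,
      -- `Mᵢ` is the (integral) matrix `D·gᵢ·D⁻¹`
      M1 * D = D * g1 ∧ M2 * D = D * g2 ∧ M3 * D = D * g3 ∧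
      -- each `D·gᵢ·D⁻¹` carries `Λ` into itself
      (∀ v ∈ Λ, M1.mulVec v ∈ Λ) ∧
      (∀ v ∈ Λ, M2.mulVec v ∈ Λ) ∧
      (∀ v ∈ Λ, M3.mulVec v ∈ Λ) ∧
      -- hence induces automorphisms `hᵢ` of `A`
      ∃ h1 h2 h3 : AddAut A,
        (∀ v : Fin 3 → ℤ,
            h1 (QuotientAddGroup.mk v) = QuotientAddGroup.mk (M1.mulVec v)) ∧
        (∀ v : Fin 3 → ℤ,
            h2 (QuotientAddGroup.mk v) = QuotientAddGroup.mk (M2.mulVec v)) ∧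
        (∀ v : Fin 3 → ℤ,
            h3 (QuotientAddGroup.mk v) = QuotientAddGroup.mk (M3.mulVec v)) ∧
        -- the subgroup generated by `h₁, h₂, h₃` is isomorphic to the
        -- dihedral group of order 12
        Nonempty ((Subgroup.closure {Multiplicative.ofAdd h1, Multiplicative.ofAdd h2,
            Multiplicative.ofAdd h3} : Subgroup (Multiplicative (AddAut A))) ≃*
            DihedralGroup 6) := by
  refine ⟨⟨by decide, by decide, by decide⟩, ⟨e⟩, M1mat, M2mat, M3mat,
    by decide, by decide, by decide, stab1, stab2, stab3,
    H1, H2, H3, H_mk1, H_mk2, H_mk3, ⟨isoA⟩⟩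

end Stmt2
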